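/- arXiv:2504.14389 — 11 statements merged into one kernel-verified Lean document; each statement's English description precedes it below -/
import Mathlib

section
/- Let j, ℓ be positive integers with ℓ ≤ 3j, and define f(j,ℓ) = 2j − ⌈ℓ/3⌉ if ℓ/3 ≤ j < 2ℓ/3, and f(j,ℓ) = 3j − ℓ if j ≥ 2ℓ/3. Then for any three j-element subsets A, B, C of [f(j,ℓ)], we have |A∩B| + |B∩C| + |C∩A| ≥ ℓ. -/
/-- `d A B C = |A∩B| + |B∩C| + |C∩A|`. -/
def dd (A B C : Finset ℕ) : ℕ := (A ∩ B).card + (B ∩ C).card + (C ∩ A).card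

/-- `f(j,ℓ) = 2j − ⌈ℓ/3⌉` if `j < 2ℓ/3`, and `3j − ℓ` if `j ≥ 2ℓ/3`. -/
def ff (j ℓ : ℕ) : ℕ := if 3 * j < 2 * ℓ then 2 * j - (ℓ + 2) / 3 else 3 * j - ℓ

theorem stmt5 (j ℓ : ℕ) (hj : 0 < j) (hℓ : 0 < ℓ) (hjℓ : ℓ ≤ 3 * j)
    (A B C : Finset ℕ)
    (hA : A ⊆ Finset.Icc 1 (ff j ℓ)) (hB : B ⊆ Finset.Icc 1 (ff j ℓ))
    (hC : C ⊆ Finset.Icc 1 (ff j ℓ))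
    (hAc : A.card = j) (hBc : B.card = j) (hCc : C.card = j) :
    ℓ ≤ dd A B C := by
  set m := ff j ℓ with hm
  have hIcc : (Finset.Icc 1 m).card = m := by simp
  have pair : ∀ X Y : Finset ℕ, X ⊆ Finset.Icc 1 m → Y ⊆ Finset.Icc 1 m →
      X.card = j → Y.card = j → 2 * j ≤ (X ∩ Y).card + m := by
    intro X Y hX hY hXc hYc
    have h1 : (X ∪ Y).card + (X ∩ Y).card = X.card + Y.card :=
      Finset.card_union_add_card_inter X Y
    have h2 : (X ∪ Y).card ≤ m := by
      rw [← hIcc]; exact Finset.card_le_card (Finset.union_subset hX hY)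
    omega
  by_cases hcase : 3 * j < 2 * ℓ
  · -- m = 2j - ⌈ℓ/3⌉; each pairwise intersection ≥ ⌈ℓ/3⌉
    have hmval : m = 2 * j - (ℓ + 2) / 3 := by rw [hm, ff, if_pos hcase]
    have hq : (ℓ + 2) / 3 ≤ j := by omega
    have hℓq : ℓ ≤ 3 * ((ℓ + 2) / 3) := by omega
    have p1 := pair A B hA hB hAc hBc
    have p2 := pair B C hB hC hBc hCc
    have p3 := pair C A hC hA hCc hAc
    unfold dd
    omega
  · -- m = 3j - ℓ; inclusion-exclusion style bound
    have hmval : m = 3 * j - ℓ := by rw [hm, ff, if_neg hcase]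
    have e1 : (A ∪ (B ∪ C)).card + (A ∩ (B ∪ C)).card = A.card + (B ∪ C).card :=
      Finset.card_union_add_card_inter A (B ∪ C)
    have e2 : (B ∪ C).card + (B ∩ C).card = B.card + C.card :=
      Finset.card_union_add_card_inter B C
    have e3 : (A ∩ (B ∪ C)).card ≤ (A ∩ B).card + (C ∩ A).card := by
      rw [Finset.inter_union_distrib_left]
      calc ((A ∩ B) ∪ (A ∩ C)).card ≤ (A ∩ B).card + (A ∩ C).card :=
            Finset.card_union_le _ _
        _ = (A ∩ B).card + (C ∩ A).card := by rw [Finset.inter_comm A C]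
    have e4 : (A ∪ (B ∪ C)).card ≤ m := by
      rw [← hIcc]
      exact Finset.card_le_card
        (Finset.union_subset hA (Finset.union_subset hB hC))
    unfold dd
    omega
end

section
/- Let n ≥ 4 and let 𝓕 ⊆ ([n] choose 2) be a family of 2-element subsets of [n] such that |A∩B| + |B∩C| + |C∩A| ≥ 2 for all A, B, C ∈ 𝓕. Then |𝓕| ≤ n + 2. -/
namespace Finset

variable {α : Type*} [DecidableEq α]

lemma eq_pair_of_card_eq_two {C : Finset α} {a b : α} (hC : C.card = 2) (ha : a ∈ C) (hb : b ∈ C)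
    (hab : a ≠ b) : C = {a, b} :=
  (eq_of_subset_of_card_le (insert_subset ha (singleton_subset_iff.2 hb))
    (by rw [card_pair hab, hC])).symm

lemma card_le_of_subset_powersetCard_two_of_forall_mem {s : Finset α} {𝓕 : Finset (Finset α)}
    {x : α} (h𝓕 : 𝓕 ⊆ s.powersetCard 2) (hx : ∀ E ∈ 𝓕, x ∈ E) : 𝓕.card ≤ s.card := by
  have h𝓕_star : 𝓕 ⊆ s.image fun z => {x, z} := by
    intro E hE
    obtain ⟨hEs, hE2⟩ := mem_powersetCard.1 (h𝓕 hE)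
    obtain ⟨z, hz⟩ := card_eq_one.1 (by rw [card_erase_of_mem (hx E hE), hE2] : (E.erase x).card = 1)
    have hzE : z ∈ E := mem_of_mem_erase (hz ▸ mem_singleton_self z)
    exact mem_image.2 ⟨z, hEs hzE, by rw [← hz, insert_erase (hx E hE)]⟩
  exact (card_le_card h𝓕_star).trans card_image_le

lemma subset_triple_of_not_disjoint {E : Finset α} {x y u : α} (hE : E.card = 2) (hxy : x ≠ y)
    (hyu : y ≠ u) (hxu : x ≠ u) (h₁ : ¬Disjoint E {x, y}) (h₂ : ¬Disjoint E {y, u})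
    (h₃ : ¬Disjoint E {x, u}) : E ⊆ {x, y, u} := by
  obtain ⟨a, b, hab, rfl⟩ := card_eq_two.1 hE
  simp only [disjoint_insert_left, disjoint_insert_right, disjoint_singleton, mem_insert,
    mem_singleton, not_and_or, not_not] at h₁ h₂ h₃
  intro z hz
  simp only [mem_insert, mem_singleton] at hz ⊢
  grind

lemma card_le_max_of_intersecting {s : Finset α} {𝓕 : Finset (Finset α)}
    (h𝓕 : 𝓕 ⊆ s.powersetCard 2) (hI : (𝓕 : Set (Finset α)).Intersecting) :
    𝓕.card ≤ max s.card 3 := by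
  have h2 : ∀ E ∈ 𝓕, E.card = 2 := fun E hE => (mem_powersetCard.1 (h𝓕 hE)).2
  rcases 𝓕.eq_empty_or_nonempty with rfl | ⟨A, hA⟩
  · simp
  obtain ⟨x, y, hxy, rfl⟩ := card_eq_two.1 (h2 A hA)
  by_cases hx : ∀ E ∈ 𝓕, x ∈ E
  · exact le_max_of_le_left (card_le_of_subset_powersetCard_two_of_forall_mem h𝓕 hx)
  by_cases hy : ∀ E ∈ 𝓕, y ∈ E
  · exact le_max_of_le_left (card_le_of_subset_powersetCard_two_of_forall_mem h𝓕 hy)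
  push Not at hx hy
  obtain ⟨C, hC, hxC⟩ := hx
  obtain ⟨D, hD, hyD⟩ := hy
  have hmeet : ∀ E ∈ 𝓕, ∀ E' ∈ 𝓕, (E ∩ E').Nonempty := fun E hE E' hE' =>
    not_disjoint_iff_nonempty_inter.1 (hI hE hE')
  have hyC : y ∈ C := by
    obtain ⟨w, hw⟩ := hmeet C hC _ hA
    rw [mem_inter, mem_insert, mem_singleton] at hw
    obtain ⟨hwC, rfl | rfl⟩ := hw
    exacts [absurd hwC hxC, hwC]
  have hxD : x ∈ D := by
    obtain ⟨w, hw⟩ := hmeet D hD _ hA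
    rw [mem_inter, mem_insert, mem_singleton] at hw
    obtain ⟨hwD, rfl | rfl⟩ := hw
    exacts [hwD, absurd hwD hyD]
  obtain ⟨u, hu⟩ := hmeet C hC D hD
  obtain ⟨huC, huD⟩ := mem_inter.1 hu
  have hyu : y ≠ u := fun h => hyD (h ▸ huD)
  have hxu : x ≠ u := fun h => hxC (h ▸ huC)
  obtain rfl := eq_pair_of_card_eq_two (h2 C hC) hyC huC hyu
  obtain rfl := eq_pair_of_card_eq_two (h2 D hD) hxD huD hxu
  have h𝓕_triangle : 𝓕 ⊆ ({x, y, u} : Finset α).powersetCard 2 := fun E hE =>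
    mem_powersetCard.2 ⟨subset_triple_of_not_disjoint (h2 E hE) hxy hyu hxu (hI hE hA) (hI hE hC)
      (hI hE hD), h2 E hE⟩
  calc 𝓕.card ≤ (({x, y, u} : Finset α).card).choose 2 := by
        simpa only [card_powersetCard] using card_le_card h𝓕_triangle
    _ ≤ Nat.choose 3 2 := Nat.choose_le_choose 2 card_le_three
    _ ≤ max s.card 3 := le_max_right _ _

lemma card_le_six_of_disjoint {𝓕 : Finset (Finset α)} {A B : Finset α} (h2 : ∀ C ∈ 𝓕, C.card = 2)
    (hA : A.card = 2) (hB : B.card = 2) (hAB : Disjoint A B)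
    (hmeet : ∀ C ∈ 𝓕, C ≠ A → C ≠ B → ¬Disjoint C A ∧ ¬Disjoint C B) : 𝓕.card ≤ 6 := by
  have h𝓕_sub : 𝓕 ⊆ insert A (insert B ((A ×ˢ B).image fun p => {p.1, p.2})) := by
    intro C hC
    rw [mem_insert, mem_insert]
    by_cases hCA : C = A
    · exact .inl hCA
    by_cases hCB : C = B
    · exact .inr (.inl hCB)
    obtain ⟨hCA', hCB'⟩ := hmeet C hC hCA hCB
    obtain ⟨a, haC, haA⟩ := not_disjoint_iff.1 hCA'
    obtain ⟨b, hbC, hbB⟩ := not_disjoint_iff.1 hCB'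
    have hab : a ≠ b := fun h => disjoint_left.1 hAB haA (h ▸ hbB)
    exact .inr (.inr (mem_image.2 ⟨(a, b), mem_product.2 ⟨haA, hbB⟩,
      (eq_pair_of_card_eq_two (h2 C hC) haC hbC hab).symm⟩))
  calc 𝓕.card ≤ ((A ×ˢ B).image fun p => ({p.1, p.2} : Finset α)).card + 1 + 1 :=
        (card_le_card h𝓕_sub).trans
          ((card_insert_le _ _).trans (Nat.succ_le_succ (card_insert_le _ _)))
    _ ≤ (A ×ˢ B).card + 1 + 1 := by gcongr; exact card_image_le
    _ = 6 := by rw [card_product, hA, hB]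

end Finset

open Finset

lemma not_disjoint_of_two_le_dd {A B C : Finset ℕ} (hB : B.card = 2) (hC : C.card = 2)
    (hAB : Disjoint A B) (hd : 2 ≤ dd A B C) (hCB : C ≠ B) : ¬Disjoint C A := by
  intro hCA
  rw [dd, disjoint_iff_inter_eq_empty.1 hAB, disjoint_iff_inter_eq_empty.1 hCA, card_empty,
    zero_add, add_zero] at hd
  have hBC : B ∩ C = B := eq_of_subset_of_card_le inter_subset_left (hB ▸ hd)
  exact hCB (eq_of_subset_of_card_le (inter_eq_left.1 hBC) (by rw [hB, hC])).symm

theorem stmt6 (n : ℕ) (hn : 4 ≤ n) (𝓕 : Finset (Finset ℕ))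
    (h𝓕 : 𝓕 ⊆ (Finset.Icc 1 n).powersetCard 2)
    (hd : ∀ A ∈ 𝓕, ∀ B ∈ 𝓕, ∀ C ∈ 𝓕, 2 ≤ dd A B C) :
    𝓕.card ≤ n + 2 := by
  have h2 : ∀ C ∈ 𝓕, C.card = 2 := fun C hC => (mem_powersetCard.1 (h𝓕 hC)).2
  by_cases hI : (𝓕 : Set (Finset ℕ)).Intersecting
  · calc 𝓕.card ≤ max (Icc 1 n).card 3 := card_le_max_of_intersecting h𝓕 hI
      _ ≤ n + 2 := by rw [Nat.card_Icc]; omega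
  obtain ⟨A, hA, B, hB, hAB⟩ : ∃ A ∈ 𝓕, ∃ B ∈ 𝓕, Disjoint A B := by
    simpa [Set.Intersecting] using hI
  have h6 := card_le_six_of_disjoint h2 (h2 A hA) (h2 B hB) hAB fun C hC hCA hCB =>
    ⟨not_disjoint_of_two_le_dd (h2 B hB) (h2 C hC) hAB (hd A hA B hB C hC) hCB,
      not_disjoint_of_two_le_dd (h2 A hA) (h2 C hC) hAB.symm (hd B hB A hA C hC) hCA⟩
  omega
end

section
/- Let n ≥ 3 and let 𝓕 ⊆ ([n] choose 2) be a family of 2-element subsets of [n] such that |A∩B| + |B∩C| + |C∩A| ≥ 3 for all A, B, C ∈ 𝓕. Then |𝓕| ≤ n. -/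
open Finset

lemma map_univ_equivFin_symm {α : Type*} (s : Finset α) :
    univ.map (s.equivFin.symm.toEmbedding.trans (Function.Embedding.subtype (· ∈ s))) = s := by
  rw [← map_map, map_univ_equiv, univ_eq_attach, attach_map_val]

theorem erdos_ko_rado_of_subset_powersetCard {α : Type*} [DecidableEq α] {s : Finset α}
    {𝒜 : Finset (Finset α)} {r : ℕ} (h𝒜s : 𝒜 ⊆ s.powersetCard r)
    (h𝒜 : (𝒜 : Set (Finset α)).Intersecting) (hr : r ≤ #s / 2) :
    #𝒜 ≤ (#s - 1).choose (r - 1) := by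
  set f : Fin #s ↪ α := s.equivFin.symm.toEmbedding.trans (Function.Embedding.subtype (· ∈ s))
  set ℬ : Finset (Finset (Fin #s)) := {B | B.map f ∈ 𝒜}
  have h𝒜ℬ : 𝒜 ⊆ ℬ.map (mapEmbedding f).toEmbedding := by
    intro A hA
    have hAs : A ⊆ univ.map f := by
      rw [map_univ_equivFin_symm]
      exact (mem_powersetCard.1 (h𝒜s hA)).1
    obtain ⟨B, -, rfl⟩ := subset_map_iff.1 hAs
    exact mem_map_of_mem _ (by simpa [ℬ] using hA)
  have hℬ : (ℬ : Set (Finset (Fin #s))).Intersecting := fun B hB C hC => by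
    simpa only [disjoint_map] using h𝒜 (mem_filter.1 hB).2 (mem_filter.1 hC).2
  have hℬr : (ℬ : Set (Finset (Fin #s))).Sized r := fun B hB => by
    simpa only [card_map] using (mem_powersetCard.1 (h𝒜s (mem_filter.1 hB).2)).2
  calc #𝒜 ≤ #ℬ := (card_le_card h𝒜ℬ).trans_eq (card_map _)
    _ ≤ (#s - 1).choose (r - 1) := erdos_ko_rado hℬ hℬr hr

lemma intersecting_of_three_le_dd {𝓕 : Finset (Finset ℕ)} (h𝓕 : ∀ A ∈ 𝓕, #A ≤ 2)
    (hd : ∀ A ∈ 𝓕, ∀ B ∈ 𝓕, ∀ C ∈ 𝓕, 3 ≤ dd A B C) :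
    (𝓕 : Set (Finset ℕ)).Intersecting := fun A hA B hB hAB => by
  have h3 := hd A hA B hB A hA
  rw [dd, inter_comm B A, disjoint_iff_inter_eq_empty.1 hAB, inter_self, card_empty] at h3
  have := h𝓕 A hA
  omega

theorem stmt7_general (n : ℕ) (𝓕 : Finset (Finset ℕ))
    (h𝓕 : 𝓕 ⊆ (Finset.Icc 1 n).powersetCard 2)
    (hd : ∀ A ∈ 𝓕, ∀ B ∈ 𝓕, ∀ C ∈ 𝓕, 3 ≤ dd A B C) :
    𝓕.card ≤ n := by
  rcases le_or_gt n 3 with hn | hn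
  · calc #𝓕 ≤ n.choose 2 := by simpa using card_le_card h𝓕
      _ ≤ n := by interval_cases n <;> decide
  · have h𝓕int := intersecting_of_three_le_dd
      (fun A hA => (mem_powersetCard.1 (h𝓕 hA)).2.le) hd
    calc #𝓕 ≤ (#(Icc 1 n) - 1).choose (2 - 1) :=
          erdos_ko_rado_of_subset_powersetCard h𝓕 h𝓕int (by rw [Nat.card_Icc]; omega)
      _ ≤ n := by simp

theorem stmt7 (n : ℕ) (hn : 3 ≤ n) (𝓕 : Finset (Finset ℕ))
    (h𝓕 : 𝓕 ⊆ (Finset.Icc 1 n).powersetCard 2)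
    (hd : ∀ A ∈ 𝓕, ∀ B ∈ 𝓕, ∀ C ∈ 𝓕, 3 ≤ dd A B C) :
    𝓕.card ≤ n :=
  stmt7_general n 𝓕 h𝓕 hd
end

section
/- Let n ≥ 4k³ and let 𝓕 ⊆ ([n] choose k) be a family such that |A∩B| + |B∩C| + |C∩A| ≥ 2 for all A, B, C ∈ 𝓕. Then |𝓕| ≤ C(n−1, k−1). -/
/-!
If `𝓕` is intersecting, this is the Erdős–Ko–Rado theorem. Otherwise `𝓕` contains disjoint
sets `A` and `B`, and the condition on the triple `A, C, B` forces every `C ∈ 𝓕` to meet the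
`2k`-set `A ∪ B` in at least two points. Hence `|𝓕| ≤ C(2k, 2) C(n-2, k-2)`, which is at most
`C(n-1, k-1) = (n-1)/(k-1) · C(n-2, k-2)` as soon as `k(2k-1)(k-1) < n`.
-/

open Finset

namespace Finset

variable {α : Type*} [DecidableEq α]

theorem card_le_choose_of_intersecting_of_subset_powersetCard {s : Finset α}
    {𝒜 : Finset (Finset α)} {r : ℕ} (h𝒜s : 𝒜 ⊆ s.powersetCard r)
    (h𝒜 : (𝒜 : Set (Finset α)).Intersecting) (hr : r ≤ #s / 2) :
    #𝒜 ≤ (#s - 1).choose (r - 1) := by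
  set e : Fin #s ↪ α := s.equivFin.symm.toEmbedding.trans (Function.Embedding.subtype _)
  have he : univ.map e = s := by
    rw [← map_map, map_univ_equiv, univ_eq_attach, attach_map_val]
  set ℬ : Finset (Finset (Fin #s)) := {B | B.map e ∈ 𝒜}
  have h𝒜ℬ : 𝒜 ⊆ ℬ.map (mapEmbedding e).toEmbedding := by
    intro A hA
    obtain ⟨B, -, rfl⟩ := subset_map_iff.1 (he ▸ (mem_powersetCard.1 (h𝒜s hA)).1)
    exact mem_map_of_mem _ (mem_filter.2 ⟨mem_univ _, hA⟩)
  have hℬ : (ℬ : Set (Finset (Fin #s))).Intersecting := fun B hB B' hB' hBB' =>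
    h𝒜 (mem_filter.1 hB).2 (mem_filter.1 hB').2 ((disjoint_map e).2 hBB')
  have hℬr : (ℬ : Set (Finset (Fin #s))).Sized r := fun B hB => by
    simpa using (mem_powersetCard.1 (h𝒜s (mem_filter.1 hB).2)).2
  calc #𝒜 ≤ #ℬ := (card_le_card h𝒜ℬ).trans_eq (card_map _)
    _ ≤ _ := erdos_ko_rado hℬ hℬr hr

theorem card_le_choose_mul_choose_of_le_card_inter {s S : Finset α} {𝒜 : Finset (Finset α)}
    {r t : ℕ} (h𝒜s : 𝒜 ⊆ s.powersetCard r) (hS : S ⊆ s) (htr : t ≤ r)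
    (hmeet : ∀ C ∈ 𝒜, t ≤ #(C ∩ S)) :
    #𝒜 ≤ (#S).choose t * (#s - t).choose (r - t) := by
  have hcover : 𝒜 ⊆ (S.powersetCard t).biUnion fun P => (s.powersetCard r).filter (P ⊆ ·) := by
    intro C hC
    obtain ⟨P, hPC, hP⟩ := exists_subset_card_eq (hmeet C hC)
    exact mem_biUnion.2 ⟨P, mem_powersetCard.2 ⟨hPC.trans inter_subset_right, hP⟩,
      mem_filter.2 ⟨h𝒜s hC, hPC.trans inter_subset_left⟩⟩
  refine (card_le_card hcover).trans ?_
  rw [← card_powersetCard t S]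
  refine card_biUnion_le_card_mul _ _ _ fun P hP => ?_
  obtain ⟨hPS, hPt⟩ := mem_powersetCard.1 hP
  rw [card_filter_powersetCard_subset P s r (hPS.trans hS) (hPt.trans_le htr), hPt]

end Finset

theorem Nat.choose_two_mul_mul_choose_sub_two_le {n k : ℕ} (hk : 2 ≤ k) (hn : 4 * k ^ 3 ≤ n) :
    (2 * k).choose 2 * (n - 2).choose (k - 2) ≤ (n - 1).choose (k - 1) := by
  obtain ⟨j, rfl⟩ : ∃ j, k = j + 2 := ⟨k - 2, by omega⟩
  have hcube : (j + 2) * (2 * j + 3) * (j + 1) + 1 ≤ 4 * (j + 2) ^ 3 := by ring_nf; omega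
  obtain ⟨m, rfl⟩ : ∃ m, n = m + 2 := ⟨n - 2, by omega⟩
  have hsq : (2 * (j + 2)).choose 2 = (j + 2) * (2 * j + 3) := by
    rw [Nat.choose_two_right, show 2 * (j + 2) - 1 = 2 * j + 3 by omega, mul_assoc,
      Nat.mul_div_cancel_left _ two_pos]
  simp only [Nat.add_sub_cancel, Nat.add_one_sub_one, show m + 2 - 1 = m + 1 by omega]
  refine Nat.le_of_mul_le_mul_right (c := j + 1) ?_ j.succ_pos
  calc (2 * (j + 2)).choose 2 * m.choose j * (j + 1)
      = (j + 2) * (2 * j + 3) * (j + 1) * m.choose j := by rw [hsq]; ring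
    _ ≤ (m + 1) * m.choose j := Nat.mul_le_mul_right _ (by omega)
    _ = (m + 1).choose (j + 1) * (j + 1) := Nat.add_one_mul_choose_eq m j

theorem dd_eq_card_inter_union_of_disjoint {A B : Finset ℕ} (hAB : Disjoint A B) (C : Finset ℕ) :
    dd A C B = #(C ∩ (A ∪ B)) := by
  rw [dd, inter_union_distrib_left,
    card_union_of_disjoint (hAB.mono inter_subset_right inter_subset_right),
    disjoint_iff_inter_eq_empty.1 hAB.symm, card_empty, inter_comm A C, add_zero]

theorem stmt9 (n k : ℕ) (hn : 4 * k ^ 3 ≤ n)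
    (𝓕 : Finset (Finset ℕ)) (h𝓕 : 𝓕 ⊆ (Finset.Icc 1 n).powersetCard k)
    (hd : ∀ A ∈ 𝓕, ∀ B ∈ 𝓕, ∀ C ∈ 𝓕, 2 ≤ dd A B C) :
    𝓕.card ≤ (n - 1).choose (k - 1) := by
  by_cases hint : (𝓕 : Set (Finset ℕ)).Intersecting
  · have hkn : k ≤ #(Icc 1 n) / 2 := by
      have := Nat.le_self_pow (by norm_num : 3 ≠ 0) k
      rw [Nat.card_Icc]
      omega
    simpa using card_le_choose_of_intersecting_of_subset_powersetCard h𝓕 hint hkn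
  obtain ⟨A, hA, B, hB, hAB⟩ : ∃ A ∈ 𝓕, ∃ B ∈ 𝓕, Disjoint A B := by
    simpa [Set.Intersecting] using hint
  have hmeet : ∀ C ∈ 𝓕, 2 ≤ #(C ∩ (A ∪ B)) := fun C hC =>
    dd_eq_card_inter_union_of_disjoint hAB C ▸ hd A hA C hC B hB
  have hcard : ∀ C ∈ 𝓕, #C = k := fun C hC => (mem_powersetCard.1 (h𝓕 hC)).2
  have hk : 2 ≤ k := hcard A hA ▸ (hmeet A hA).trans (card_le_card inter_subset_left)
  have hABn : A ∪ B ⊆ Icc 1 n :=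
    union_subset (mem_powersetCard.1 (h𝓕 hA)).1 (mem_powersetCard.1 (h𝓕 hB)).1
  calc #𝓕 ≤ (#(A ∪ B)).choose 2 * (#(Icc 1 n) - 2).choose (k - 2) :=
        card_le_choose_mul_choose_of_le_card_inter h𝓕 hABn hk hmeet
    _ = (2 * k).choose 2 * (n - 2).choose (k - 2) := by
        rw [card_union_of_disjoint hAB, hcard A hA, hcard B hB, Nat.card_Icc, two_mul,
          Nat.add_sub_cancel]
    _ ≤ (n - 1).choose (k - 1) := Nat.choose_two_mul_mul_choose_sub_two_le hk hn
end

section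
/- Let n ≥ 4k³ and let 𝓕 ⊆ ([n] choose k) be a family such that |A∩B| + |B∩C| + |C∩A| ≥ 3 for all A, B, C ∈ 𝓕. Then |𝓕| = C(n−1,k−1) is attained: the family of all k-subsets containing a fixed element satisfies the condition, and no larger family does. -/
/-! If `𝓕` is intersecting, the Erdős–Ko–Rado theorem bounds it by `C(n-1, k-1)`.
Otherwise `𝓕` contains disjoint `A` and `B`, and then `d(A, B, C) = |C ∩ (A ∪ B)|`:
taking `C = A` gives `k ≥ 3`, and every member `C` is the union of a 3-subset of the
`2k`-set `A ∪ B` and a `(k-3)`-subset of `[n]`. Hence `|𝓕| ≤ C(2k, 3) C(n, k-3)`, which is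
at most `C(n-1, k-1)` once `n ≥ 4k³`, as `C(n-1, k-1) / C(n, k-3)` is of order `n² / k²`. -/

open Finset

theorem three_le_dd_of_mem {A B C : Finset ℕ} {a : ℕ} (hA : a ∈ A) (hB : a ∈ B)
    (hC : a ∈ C) : 3 ≤ dd A B C := by
  have hAB : 1 ≤ #(A ∩ B) := card_pos.2 ⟨a, mem_inter.2 ⟨hA, hB⟩⟩
  have hBC : 1 ≤ #(B ∩ C) := card_pos.2 ⟨a, mem_inter.2 ⟨hB, hC⟩⟩
  have hCA : 1 ≤ #(C ∩ A) := card_pos.2 ⟨a, mem_inter.2 ⟨hC, hA⟩⟩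
  unfold dd
  omega

theorem dd_eq_card_inter_union {A B : Finset ℕ} (h : Disjoint A B) (C : Finset ℕ) :
    dd A B C = #(C ∩ (A ∪ B)) := by
  rw [dd, disjoint_iff_inter_eq_empty.1 h, card_empty, inter_union_distrib_left,
    card_union_of_disjoint (h.mono inter_subset_right inter_subset_right), inter_comm B C]
  ring

theorem card_filter_mem_powersetCard {α : Type*} [DecidableEq α] {s : Finset α} {a : α}
    (ha : a ∈ s) {k : ℕ} (hk : 1 ≤ k) :
    #((s.powersetCard k).filter (a ∈ ·)) = (#s - 1).choose (k - 1) := by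
  simpa only [singleton_subset_iff, card_singleton] using
    card_filter_powersetCard_subset {a} s k (singleton_subset_iff.2 ha) (by simpa using hk)

theorem card_le_choose_mul_choose_of_le_card_inter {α : Type*} [DecidableEq α]
    {s U : Finset α} {𝓕 : Finset (Finset α)} {k t : ℕ} (h𝓕 : 𝓕 ⊆ s.powersetCard k)
    (hU : ∀ C ∈ 𝓕, t ≤ #(C ∩ U)) :
    #𝓕 ≤ (#U).choose t * (#s).choose (k - t) := by
  set P := U.powersetCard t ×ˢ s.powersetCard (k - t)
  have hsplit : 𝓕 ⊆ P.image (fun p => p.1 ∪ p.2) := by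
    intro C hC
    obtain ⟨hCs, hCk⟩ := mem_powersetCard.1 (h𝓕 hC)
    obtain ⟨T, hT, hTt⟩ := exists_subset_card_eq (hU C hC)
    have hTC : T ⊆ C := hT.trans inter_subset_left
    refine mem_image.2 ⟨(T, C \ T), mem_product.2 ⟨?_, ?_⟩, union_sdiff_of_subset hTC⟩
    · exact mem_powersetCard.2 ⟨hT.trans inter_subset_right, hTt⟩
    · refine mem_powersetCard.2 ⟨sdiff_subset.trans hCs, ?_⟩
      rw [card_sdiff_of_subset hTC, hCk, hTt]
  calc #𝓕 ≤ #(P.image (fun p => p.1 ∪ p.2)) := card_le_card hsplit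
    _ ≤ #P := card_image_le
    _ = (#U).choose t * (#s).choose (k - t) := by
      rw [card_product, card_powersetCard, card_powersetCard]

theorem card_le_choose_of_intersecting {α : Type*} [DecidableEq α] {s : Finset α}
    {𝓕 : Finset (Finset α)} {k : ℕ} (h𝓕 : 𝓕 ⊆ s.powersetCard k)
    (hint : (𝓕 : Set (Finset α)).Intersecting) (hk : 2 * k ≤ #s) :
    #𝓕 ≤ (#s - 1).choose (k - 1) := by
  set φ : Finset α → Finset (Fin #s) :=
    fun F => (F.subtype (· ∈ s)).map s.equivFin.toEmbedding
  have hsub : ∀ F ∈ 𝓕, F ⊆ s := fun F hF => (mem_powersetCard.1 (h𝓕 hF)).1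
  have hφinj : Set.InjOn φ 𝓕 := by
    intro F hF G hG hFG
    have h := congrArg (map (Function.Embedding.subtype _)) (map_injective _ hFG)
    rwa [subtype_map_of_mem (hsub F hF), subtype_map_of_mem (hsub G hG)] at h
  have hsized : (↑(𝓕.image φ) : Set (Finset (Fin #s))).Sized k := by
    intro S hS
    obtain ⟨F, hF, rfl⟩ := mem_image.1 hS
    rw [card_map, card_subtype, filter_true_of_mem (hsub F hF), (mem_powersetCard.1 (h𝓕 hF)).2]
  have hinter : (↑(𝓕.image φ) : Set (Finset (Fin #s))).Intersecting := by
    intro S hS T hT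
    obtain ⟨F, hF, rfl⟩ := mem_image.1 hS
    obtain ⟨G, hG, rfl⟩ := mem_image.1 hT
    obtain ⟨a, haF, haG⟩ := not_disjoint_iff.1 (hint hF hG)
    refine not_disjoint_iff.2 ⟨s.equivFin ⟨a, hsub F hF haF⟩, ?_, ?_⟩ <;> simpa [φ]
  rw [← card_image_of_injOn hφinj]
  exact erdos_ko_rado hinter hsized (by omega)

theorem Nat.choose_succ_le_two_mul_choose {N m : ℕ} (h : 2 * m ≤ N + 1) :
    (N + 1).choose m ≤ 2 * N.choose m := by
  have hpos : 0 < N + 1 - m := by omega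
  refine Nat.le_of_mul_le_mul_right ?_ hpos
  calc (N + 1).choose m * (N + 1 - m) = N.choose m * (N + 1) :=
        (Nat.choose_mul_succ_eq N m).symm
    _ ≤ N.choose m * (2 * (N + 1 - m)) := Nat.mul_le_mul_left _ (by omega)
    _ = 2 * N.choose m * (N + 1 - m) := by ring

theorem Nat.choose_add_two_mul_eq (N m : ℕ) :
    N.choose (m + 2) * ((m + 1) * (m + 2)) = N.choose m * ((N - m) * (N - (m + 1))) := by
  calc N.choose (m + 2) * ((m + 1) * (m + 2))
      = N.choose (m + 1 + 1) * (m + 1 + 1) * (m + 1) := by ring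
    _ = N.choose m * (N - m) * (N - (m + 1)) := by
      rw [Nat.choose_succ_right_eq, mul_right_comm, Nat.choose_succ_right_eq]
    _ = N.choose m * ((N - m) * (N - (m + 1))) := by ring

theorem choose_three_mul_choose_le {n k : ℕ} (hk : 3 ≤ k) (hn : 4 * k ^ 3 ≤ n) :
    (2 * k).choose 3 * n.choose (k - 3) ≤ (n - 1).choose (k - 1) := by
  obtain ⟨m, rfl⟩ := Nat.exists_eq_add_of_le' hk
  obtain ⟨N, rfl⟩ : ∃ N, n = N + 1 :=
    Nat.exists_eq_add_one.2 ((by positivity : 0 < 4 * (m + 3) ^ 3).trans_le hn)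
  simp only [Nat.add_sub_cancel, show m + 3 - 1 = m + 2 by omega]
  set k := m + 3
  have hcube : k ≤ k ^ 3 := Nat.le_self_pow (by norm_num) k
  have hN : 3 * k ^ 3 ≤ N - (m + 1) := by omega
  have hfactor : (2 * k).choose 3 * (2 * ((m + 1) * (m + 2))) ≤ (N - m) * (N - (m + 1)) :=
    calc (2 * k).choose 3 * (2 * ((m + 1) * (m + 2))) ≤ (2 * k) ^ 3 * (2 * (k * k)) := by
          gcongr
          · exact Nat.choose_le_pow _ _
          all_goals omega
      _ ≤ (3 * k ^ 3) * (3 * k ^ 3) := by nlinarith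
      _ ≤ (N - m) * (N - (m + 1)) := by gcongr; omega
  refine Nat.le_of_mul_le_mul_right ?_ (show 0 < (m + 1) * (m + 2) by positivity)
  rw [Nat.choose_add_two_mul_eq]
  calc (2 * k).choose 3 * (N + 1).choose m * ((m + 1) * (m + 2))
      ≤ (2 * k).choose 3 * (2 * N.choose m) * ((m + 1) * (m + 2)) := by
        gcongr
        exact Nat.choose_succ_le_two_mul_choose (by omega)
    _ = N.choose m * ((2 * k).choose 3 * (2 * ((m + 1) * (m + 2)))) := by ring
    _ ≤ N.choose m * ((N - m) * (N - (m + 1))) := by gcongr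

theorem card_le_of_three_le_dd {s : Finset ℕ} {𝓕 : Finset (Finset ℕ)} {k : ℕ}
    (hs : 4 * k ^ 3 ≤ #s) (h𝓕 : 𝓕 ⊆ s.powersetCard k)
    (hdd : ∀ A ∈ 𝓕, ∀ B ∈ 𝓕, ∀ C ∈ 𝓕, 3 ≤ dd A B C) :
    #𝓕 ≤ (#s - 1).choose (k - 1) := by
  by_cases hint : (𝓕 : Set (Finset ℕ)).Intersecting
  · have hcube : k ≤ k ^ 3 := Nat.le_self_pow (by norm_num) k
    exact card_le_choose_of_intersecting h𝓕 hint (by omega)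
  obtain ⟨A, hA, B, hB, hAB⟩ : ∃ A ∈ 𝓕, ∃ B ∈ 𝓕, Disjoint A B := by
    simpa [Set.Intersecting] using hint
  have hcard : ∀ F ∈ 𝓕, #F = k := fun F hF => (mem_powersetCard.1 (h𝓕 hF)).2
  have hk : 3 ≤ k := by
    have h := hdd A hA B hB A hA
    rwa [dd_eq_card_inter_union hAB, inter_eq_left.2 subset_union_left, hcard A hA] at h
  have hUcard : #(A ∪ B) = 2 * k := by
    rw [card_union_of_disjoint hAB, hcard A hA, hcard B hB, two_mul]
  calc #𝓕 ≤ (#(A ∪ B)).choose 3 * (#s).choose (k - 3) :=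
        card_le_choose_mul_choose_of_le_card_inter h𝓕 fun C hC => by
          simpa only [dd_eq_card_inter_union hAB] using hdd A hA B hB C hC
    _ ≤ (#s - 1).choose (k - 1) := hUcard ▸ choose_three_mul_choose_le hk hs

theorem stmt10 (n k : ℕ) (hk : 1 ≤ k) (hn : 4 * k ^ 3 ≤ n) :
    (∀ A ∈ ((Finset.Icc 1 n).powersetCard k).filter (fun F => 1 ∈ F),
      ∀ B ∈ ((Finset.Icc 1 n).powersetCard k).filter (fun F => 1 ∈ F),
      ∀ C ∈ ((Finset.Icc 1 n).powersetCard k).filter (fun F => 1 ∈ F), 3 ≤ dd A B C) ∧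
    (((Finset.Icc 1 n).powersetCard k).filter (fun F => 1 ∈ F)).card = (n - 1).choose (k - 1) ∧
    (∀ 𝓕 : Finset (Finset ℕ), 𝓕 ⊆ (Finset.Icc 1 n).powersetCard k →
      (∀ A ∈ 𝓕, ∀ B ∈ 𝓕, ∀ C ∈ 𝓕, 3 ≤ dd A B C) → 𝓕.card ≤ (n - 1).choose (k - 1)) := by
  have hcard : #(Icc 1 n) = n := by simp
  refine ⟨fun A hA B hB C hC => ?_, ?_, fun 𝓕 h𝓕 hdd => ?_⟩
  · exact three_le_dd_of_mem (mem_filter.1 hA).2 (mem_filter.1 hB).2 (mem_filter.1 hC).2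
  · have hcube : k ≤ k ^ 3 := Nat.le_self_pow (by norm_num) k
    rw [card_filter_mem_powersetCard (mem_Icc.2 ⟨le_rfl, by omega⟩) hk, hcard]
  · simpa only [hcard] using card_le_of_three_le_dd (hcard.symm ▸ hn) h𝓕 hdd
end

section
/- Let 𝓕 ⊆ ([n] choose k) be a family such that |A∩B| + |B∩C| + |C∩A| ≥ 2 for all A, B, C ∈ 𝓕, and suppose there exist disjoint A, B ∈ 𝓕. Then every set C ∈ 𝓕 contains at least 2 elements of A ∪ B, and consequently |𝓕| ≤ C(2k, 2)·C(n, k−2). -/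
/-! Since `A ∩ B = ∅`, the condition `d(A, B, C) ≥ 2` says exactly that `C` has at least two
elements in `A ∪ B`. Choosing such a pair `P ⊆ C ∩ (A ∪ B)` for each `C`, the map
`C ↦ (P, C \ P)` is injective from `𝓕` into `(A ∪ B choose 2) × ([n] choose k - 2)`. -/

namespace Finset

variable {α : Type*} [DecidableEq α]

theorem card_inter_union_of_disjoint {A B : Finset α} (hAB : Disjoint A B) (C : Finset α) :
    (C ∩ (A ∪ B)).card = (C ∩ A).card + (C ∩ B).card := by
  rw [inter_union_distrib_left]
  exact card_union_of_disjoint (hAB.mono inter_subset_right inter_subset_right)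

theorem card_le_choose_mul_choose_of_le_card_inter_s11 {s T : Finset α} {𝓕 : Finset (Finset α)}
    {k t : ℕ} (h𝓕 : 𝓕 ⊆ s.powersetCard k) (hT : ∀ C ∈ 𝓕, t ≤ (C ∩ T).card) :
    𝓕.card ≤ T.card.choose t * s.card.choose (k - t) := by
  choose! P hP hPcard using fun C hC => exists_subset_card_eq (hT C hC)
  have hPC : ∀ C ∈ 𝓕, P C ⊆ C := fun C hC => (hP C hC).trans inter_subset_left
  rw [← card_powersetCard, ← card_powersetCard, ← card_product]
  refine card_le_card_of_injOn (fun C => (P C, C \ P C)) (fun C hC => ?_) ?_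
  · obtain ⟨hCs, hCk⟩ := mem_powersetCard.mp (h𝓕 hC)
    simp only [coe_product, Set.mem_prod, mem_coe, mem_powersetCard]
    refine ⟨⟨(hP C hC).trans inter_subset_right, hPcard C hC⟩, sdiff_subset.trans hCs, ?_⟩
    rw [card_sdiff_of_subset (hPC C hC), hCk, hPcard C hC]
  · intro C hC D hD hCD
    obtain ⟨hP_eq, hdiff_eq⟩ := Prod.mk.inj hCD
    rw [← sdiff_union_of_subset (hPC C hC), ← sdiff_union_of_subset (hPC D hD), hdiff_eq,
      hP_eq]

end Finset

theorem two_le_card_inter_union_of_disjoint {A B C : Finset ℕ} (hAB : Disjoint A B)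
    (hd : 2 ≤ dd A B C) : 2 ≤ (C ∩ (A ∪ B)).card := by
  rw [Finset.card_inter_union_of_disjoint hAB, Finset.inter_comm C B]
  simpa [dd, Finset.disjoint_iff_inter_eq_empty.mp hAB, add_comm] using hd

theorem stmt11 (n k : ℕ) (𝓕 : Finset (Finset ℕ))
    (h𝓕 : 𝓕 ⊆ (Finset.Icc 1 n).powersetCard k)
    (hd : ∀ A ∈ 𝓕, ∀ B ∈ 𝓕, ∀ C ∈ 𝓕, 2 ≤ dd A B C)
    (A B : Finset ℕ) (hA : A ∈ 𝓕) (hB : B ∈ 𝓕) (hAB : Disjoint A B) :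
    (∀ C ∈ 𝓕, 2 ≤ (C ∩ (A ∪ B)).card) ∧
    𝓕.card ≤ (2 * k).choose 2 * n.choose (k - 2) := by
  have hmeet : ∀ C ∈ 𝓕, 2 ≤ (C ∩ (A ∪ B)).card := fun C hC =>
    two_le_card_inter_union_of_disjoint hAB (hd A hA B hB C hC)
  have hcard : ∀ C ∈ 𝓕, C.card = k := fun C hC => (Finset.mem_powersetCard.mp (h𝓕 hC)).2
  have hAB_card : (A ∪ B).card = 2 * k := by
    rw [Finset.card_union_of_disjoint hAB, hcard A hA, hcard B hB, two_mul]
  refine ⟨hmeet, ?_⟩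
  simpa [hAB_card] using Finset.card_le_choose_mul_choose_of_le_card_inter_s11 h𝓕 hmeet
end

section
/- Let 1 ≤ y < x ≤ n and let 𝓕 ⊆ 2^[n] satisfy |A∩B| + |B∩C| + |C∩A| ≥ ℓ for all A, B, C ∈ 𝓕. Then the shifted family τ_{x,y}(𝓕) also satisfies |A'∩B'| + |B'∩C'| + |C'∩A'| ≥ ℓ for all A', B', C' ∈ τ_{x,y}(𝓕). -/
/-- The Frankl shift `τ_{x,y}` applied to a member `F` of the family `𝓕`. -/
def tau (x y : ℕ) (𝓕 : Finset (Finset ℕ)) (F : Finset ℕ) : Finset ℕ :=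
  if x ∈ F ∧ y ∉ F ∧ insert y (F.erase x) ∉ 𝓕 then insert y (F.erase x) else F

lemma sINT {x y : ℕ} (hxy : x ≠ y) {A : Finset ℕ} (hxA : x ∈ A) (hyA : y ∉ A)
    (B : Finset ℕ) :
    ((insert y (A.erase x)) ∩ B).card + (if x ∈ B then 1 else 0)
      = (A ∩ B).card + (if y ∈ B then 1 else 0) := by
  by_cases hxB : x ∈ B <;> by_cases hyB : y ∈ B <;>
      simp only [hxB, hyB, if_true, if_false]
  · have h : insert y (A.erase x) ∩ B = insert y ((A ∩ B).erase x) := by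
      ext e
      simp only [Finset.mem_inter, Finset.mem_insert, Finset.mem_erase]
      constructor
      · rintro ⟨h1 | ⟨h2, h3⟩, hB⟩
        · exact Or.inl h1
        · exact Or.inr ⟨h2, h3, hB⟩
      · rintro (rfl | ⟨h2, h3, hB⟩)
        · exact ⟨Or.inl rfl, hyB⟩
        · exact ⟨Or.inr ⟨h2, h3⟩, hB⟩
    rw [h, Finset.card_insert_of_notMem (by simp [Finset.mem_erase, hyA]),
      Finset.card_erase_of_mem (by simp [hxA, hxB])]
    have h1 : 1 ≤ (A ∩ B).card := Finset.card_pos.mpr ⟨x, by simp [hxA, hxB]⟩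
    omega
  · have h : insert y (A.erase x) ∩ B = (A ∩ B).erase x := by
      ext e
      simp only [Finset.mem_inter, Finset.mem_insert, Finset.mem_erase]
      constructor
      · rintro ⟨h1 | ⟨h2, h3⟩, hB⟩
        · exact absurd (h1 ▸ hB) hyB
        · exact ⟨h2, h3, hB⟩
      · rintro ⟨h2, h3, hB⟩
        exact ⟨Or.inr ⟨h2, h3⟩, hB⟩
    rw [h, Finset.card_erase_of_mem (by simp [hxA, hxB])]
    have h1 : 1 ≤ (A ∩ B).card := Finset.card_pos.mpr ⟨x, by simp [hxA, hxB]⟩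
    omega
  · have h : insert y (A.erase x) ∩ B = insert y (A ∩ B) := by
      ext e
      simp only [Finset.mem_inter, Finset.mem_insert, Finset.mem_erase]
      constructor
      · rintro ⟨h1 | ⟨h2, h3⟩, hB⟩
        · exact Or.inl h1
        · exact Or.inr ⟨h3, hB⟩
      · rintro (rfl | ⟨h3, hB⟩)
        · exact ⟨Or.inl rfl, hyB⟩
        · exact ⟨Or.inr ⟨fun he => hxB (he ▸ hB), h3⟩, hB⟩
    rw [h, Finset.card_insert_of_notMem (by simp [hyA])]
  · have h : insert y (A.erase x) ∩ B = A ∩ B := by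
      ext e
      simp only [Finset.mem_inter, Finset.mem_insert, Finset.mem_erase]
      constructor
      · rintro ⟨h1 | ⟨h2, h3⟩, hB⟩
        · exact absurd (h1 ▸ hB) hyB
        · exact ⟨h3, hB⟩
      · rintro ⟨h3, hB⟩
        exact ⟨Or.inr ⟨fun he => hxB (he ▸ hB), h3⟩, hB⟩
    rw [h]

lemma sINTs {x y : ℕ} (hxy : x ≠ y) {A B : Finset ℕ} (hxA : x ∈ A) (hyA : y ∉ A)
    (hxB : x ∈ B) (hyB : y ∉ B) :
    ((insert y (A.erase x)) ∩ (insert y (B.erase x))).card = (A ∩ B).card := by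
  have h : insert y (A.erase x) ∩ insert y (B.erase x) = insert y ((A ∩ B).erase x) := by
    ext e
    simp only [Finset.mem_inter, Finset.mem_insert, Finset.mem_erase]
    constructor
    · rintro ⟨h1 | ⟨h2, h3⟩, h4 | ⟨h5, h6⟩⟩
      · exact Or.inl h1
      · exact Or.inl h1
      · exact Or.inl h4
      · exact Or.inr ⟨h2, h3, h6⟩
    · rintro (rfl | ⟨h2, h3, h6⟩)
      · exact ⟨Or.inl rfl, Or.inl rfl⟩
      · exact ⟨Or.inr ⟨h2, h3⟩, Or.inr ⟨h2, h6⟩⟩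
  rw [h, Finset.card_insert_of_notMem (by simp [Finset.mem_erase, hyA]),
    Finset.card_erase_of_mem (by simp [hxA, hxB])]
  have h1 : 1 ≤ (A ∩ B).card := Finset.card_pos.mpr ⟨x, by simp [hxA, hxB]⟩
  omega

lemma k3 {x y ℓ : ℕ} (hxy : x ≠ y) {𝓕 : Finset (Finset ℕ)}
    (hd : ∀ A ∈ 𝓕, ∀ B ∈ 𝓕, ∀ C ∈ 𝓕, ℓ ≤ dd A B C)
    {A B C : Finset ℕ} (hA : A ∈ 𝓕) (hxA : x ∈ A) (hyA : y ∉ A)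
    (hB : B ∈ 𝓕) (hxB : x ∈ B) (hyB : y ∉ B)
    (hC : C ∈ 𝓕) (hxC : x ∈ C) (hyC : y ∉ C) :
    ℓ ≤ dd (insert y (A.erase x)) (insert y (B.erase x)) (insert y (C.erase x)) := by
  have e1 := sINTs hxy hxA hyA hxB hyB
  have e2 := sINTs hxy hxB hyB hxC hyC
  have e3 := sINTs hxy hxC hyC hxA hyA
  have h := hd A hA B hB C hC
  have c1 : (insert y (C.erase x) ∩ insert y (A.erase x)).card
      = (insert y (A.erase x) ∩ insert y (C.erase x)).card := by rw [Finset.inter_comm]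
  have c2 : (C ∩ A).card = (A ∩ C).card := by rw [Finset.inter_comm]
  have e3' := sINTs hxy hxA hyA hxC hyC
  unfold dd at *
  omega

lemma k2 {x y ℓ : ℕ} (hxy : x ≠ y) {𝓕 : Finset (Finset ℕ)}
    (hd : ∀ A ∈ 𝓕, ∀ B ∈ 𝓕, ∀ C ∈ 𝓕, ℓ ≤ dd A B C)
    {A B C : Finset ℕ} (hA : A ∈ 𝓕) (hxA : x ∈ A) (hyA : y ∉ A)
    (hB : B ∈ 𝓕) (hxB : x ∈ B) (hyB : y ∉ B)
    (hC : C ∈ 𝓕) (hgC : x ∈ C → y ∉ C → insert y (C.erase x) ∈ 𝓕) :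
    ℓ ≤ dd (insert y (A.erase x)) (insert y (B.erase x)) C := by
  have eAB := sINTs hxy hxA hyA hxB hyB
  have eBC := sINT hxy hxB hyB C
  have eCA := sINT hxy hxA hyA C
  have c1 : (C ∩ insert y (A.erase x)).card = (insert y (A.erase x) ∩ C).card := by
    rw [Finset.inter_comm]
  have c2 : (C ∩ A).card = (A ∩ C).card := by rw [Finset.inter_comm]
  by_cases hxC : x ∈ C
  · by_cases hyC : y ∈ C
    · have h := hd A hA B hB C hC
      simp only [hxC, hyC, if_true] at eBC eCA
      unfold dd at *
      omega
    · have hSC := hgC hxC hyC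
      have h := hd A hA B hB _ hSC
      have eCB := sINT hxy hxC hyC B
      have eCA2 := sINT hxy hxC hyC A
      simp only [hxC, hyC, hxA, hyA, hxB, hyB, if_true, if_false] at eBC eCA eCB eCA2
      have c3 : (B ∩ insert y (C.erase x)).card = (insert y (C.erase x) ∩ B).card := by
        rw [Finset.inter_comm]
      have c4 : (C ∩ B).card = (B ∩ C).card := by rw [Finset.inter_comm]
      have c5 : (insert y (C.erase x) ∩ A).card = (A ∩ insert y (C.erase x)).card := by
        rw [Finset.inter_comm]
      have c6 : (C ∩ A).card = (A ∩ C).card := by rw [Finset.inter_comm]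
      unfold dd at *
      omega
  · have h := hd A hA B hB C hC
    simp only [hxC, if_false] at eBC eCA
    unfold dd at *
    by_cases hyC : y ∈ C <;> simp only [hyC, if_true, if_false] at eBC eCA <;> omega

lemma k1 {x y ℓ : ℕ} (hxy : x ≠ y) {𝓕 : Finset (Finset ℕ)}
    (hd : ∀ A ∈ 𝓕, ∀ B ∈ 𝓕, ∀ C ∈ 𝓕, ℓ ≤ dd A B C)
    {A B C : Finset ℕ} (hA : A ∈ 𝓕) (hxA : x ∈ A) (hyA : y ∉ A)
    (hB : B ∈ 𝓕) (hgB : x ∈ B → y ∉ B → insert y (B.erase x) ∈ 𝓕)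
    (hC : C ∈ 𝓕) (hgC : x ∈ C → y ∉ C → insert y (C.erase x) ∈ 𝓕) :
    ℓ ≤ dd (insert y (A.erase x)) B C := by
  have eAB := sINT hxy hxA hyA B
  have eAC := sINT hxy hxA hyA C
  have c1 : (C ∩ insert y (A.erase x)).card = (insert y (A.erase x) ∩ C).card := by
    rw [Finset.inter_comm]
  have c4 : (C ∩ A).card = (A ∩ C).card := by rw [Finset.inter_comm]
  by_cases h1 : x ∈ B ∧ y ∉ B
  · obtain ⟨hxB, hyB⟩ := h1
    have hSB := hgB hxB hyB
    have h := hd A hA _ hSB C hC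
    have eBA := sINT hxy hxB hyB A
    have eBC := sINT hxy hxB hyB C
    simp only [hxB, hyB, hxA, hyA, if_true, if_false] at eAB eBA
    have c2 : (A ∩ insert y (B.erase x)).card = (insert y (B.erase x) ∩ A).card := by
      rw [Finset.inter_comm]
    have c3 : (B ∩ A).card = (A ∩ B).card := by rw [Finset.inter_comm]
    unfold dd at *
    by_cases hxC : x ∈ C <;> by_cases hyC : y ∈ C <;>
      simp only [hxC, hyC, if_true, if_false] at eAC eBC <;> omega
  · by_cases h2 : x ∈ C ∧ y ∉ C
    · obtain ⟨hxC, hyC⟩ := h2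
      have hSC := hgC hxC hyC
      have h := hd A hA B hB _ hSC
      have eCB := sINT hxy hxC hyC B
      have eCA := sINT hxy hxC hyC A
      simp only [hxC, hyC, hxA, hyA, if_true, if_false] at eAC eCA
      have c2 : (B ∩ insert y (C.erase x)).card = (insert y (C.erase x) ∩ B).card := by
        rw [Finset.inter_comm]
      have c3 : (C ∩ B).card = (B ∩ C).card := by rw [Finset.inter_comm]
      have c5 : (insert y (C.erase x) ∩ A).card = (A ∩ insert y (C.erase x)).card := by
        rw [Finset.inter_comm]
      unfold dd at *
      by_cases hxB : x ∈ B <;> by_cases hyB : y ∈ B <;>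
        simp only [hxB, hyB, if_true, if_false] at eAB eCB <;>
        first
          | omega
          | tauto
    · have h := hd A hA B hB C hC
      unfold dd at *
      by_cases hxB : x ∈ B <;> by_cases hyB : y ∈ B <;>
        by_cases hxC : x ∈ C <;> by_cases hyC : y ∈ C <;>
        simp only [hxB, hyB, hxC, hyC, if_true, if_false] at eAB eAC <;>
        first
          | omega
          | tauto

theorem stmt12 (n x y ℓ : ℕ) (hy : 1 ≤ y) (hyx : y < x) (hx : x ≤ n)
    (𝓕 : Finset (Finset ℕ)) (h𝓕 : ∀ F ∈ 𝓕, F ⊆ Finset.Icc 1 n)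
    (hd : ∀ A ∈ 𝓕, ∀ B ∈ 𝓕, ∀ C ∈ 𝓕, ℓ ≤ dd A B C) :
    ∀ A' ∈ 𝓕.image (tau x y 𝓕), ∀ B' ∈ 𝓕.image (tau x y 𝓕), ∀ C' ∈ 𝓕.image (tau x y 𝓕),
      ℓ ≤ dd A' B' C' := by
  have hxy : x ≠ y := hyx.ne'
  have ddcyc : ∀ A B C : Finset ℕ, dd A B C = dd B C A := by
    intro A B C; unfold dd; ring
  have ddswap : ∀ A B C : Finset ℕ, dd A B C = dd B A C := by
    intro A B C; unfold dd
    rw [Finset.inter_comm B A, Finset.inter_comm A C, Finset.inter_comm C B]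
    ring
  have char : ∀ P ∈ 𝓕.image (tau x y 𝓕),
      (P ∈ 𝓕 ∧ (x ∈ P → y ∉ P → insert y (P.erase x) ∈ 𝓕)) ∨
      (∃ F, F ∈ 𝓕 ∧ x ∈ F ∧ y ∉ F ∧ P = insert y (F.erase x)) := by
    intro P hP
    obtain ⟨G, hG, rfl⟩ := Finset.mem_image.mp hP
    unfold tau
    split_ifs with h
    · exact Or.inr ⟨G, hG, h.1, h.2.1, rfl⟩
    · refine Or.inl ⟨hG, fun hx' hy' => ?_⟩
      by_contra hS
      exact h ⟨hx', hy', hS⟩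
  intro A' hA' B' hB' C' hC'
  rcases char A' hA' with ⟨hAg, hAgood⟩ | ⟨FA, hFA, hxFA, hyFA, rfl⟩ <;>
    rcases char B' hB' with ⟨hBg, hBgood⟩ | ⟨FB, hFB, hxFB, hyFB, rfl⟩ <;>
      rcases char C' hC' with ⟨hCg, hCgood⟩ | ⟨FC, hFC, hxFC, hyFC, rfl⟩
  · exact hd _ hAg _ hBg _ hCg
  · rw [ddcyc, ddcyc]
    exact k1 hxy hd hFC hxFC hyFC hAg hAgood hBg hBgood
  · rw [ddswap]
    exact k1 hxy hd hFB hxFB hyFB hAg hAgood hCg hCgood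
  · rw [ddcyc]
    exact k2 hxy hd hFB hxFB hyFB hFC hxFC hyFC hAg hAgood
  · exact k1 hxy hd hFA hxFA hyFA hBg hBgood hCg hCgood
  · rw [ddcyc, ddcyc]
    exact k2 hxy hd hFC hxFC hyFC hFA hxFA hyFA hBg hBgood
  · exact k2 hxy hd hFA hxFA hyFA hFB hxFB hyFB hCg hCgood
  · exact k3 hxy hd hFA hxFA hyFA hFB hxFB hyFB hFC hxFC hyFC
end

section
/- There exist k-uniform sets A, B, C and a shifted family showing Claim on restriction fails for ℓ = 4: let A = {1,2,6}, B = {1,3,6}, C = {1,4,5} ⊆ [6], and let 𝓕 = {H ∈ ([6] choose 3) : H ≤ A or H ≤ B or H ≤ C} (componentwise order). Then |X∩Y| + |Y∩Z| + |Z∩X| ≥ 4 for all X, Y, Z ∈ 𝓕, but for the restrictions A' = A∩[5], B' = B∩[5], C' = C∩[5] we have |A'∩B'| + |B'∩C'| + |C'∩A'| < 4. -/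
/-- Componentwise domination for finite sets of naturals: writing `I = {i₁<…<i_k}`,
`H = {h₁<…<h_k}`, `compLE I H` says `i_j ≤ h_j` for all `j` (expressed via the equivalent
counting condition `|H ∩ [t]| ≤ |I ∩ [t]|` for all `t`, for sets of equal size). -/
def compLE (I H : Finset ℕ) : Prop :=
  I.card = H.card ∧ ∀ t : ℕ, (H.filter (· ≤ t)).card ≤ (I.filter (· ≤ t)).card

/-- Bounded (decidable) version of `compLE`. -/
def compLE' (N : ℕ) (I H : Finset ℕ) : Prop :=
  I.card = H.card ∧ ∀ t ∈ Finset.range (N + 1), (H.filter (· ≤ t)).card ≤ (I.filter (· ≤ t)).card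

instance : ∀ N I H, Decidable (compLE' N I H) := fun N I H => by
  unfold compLE'; infer_instance

lemma filter_le_of_subset {H : Finset ℕ} {N t : ℕ} (hH : H ⊆ Finset.Icc 1 N) (ht : N ≤ t) :
    H.filter (· ≤ t) = H := by
  apply Finset.filter_true_of_mem
  intro x hx
  have := hH hx
  simp only [Finset.mem_Icc] at this
  omega

lemma compLE_iff {N : ℕ} {I H : Finset ℕ} (hI : I ⊆ Finset.Icc 1 N) (hH : H ⊆ Finset.Icc 1 N) :
    compLE I H ↔ compLE' N I H := by
  constructor
  · rintro ⟨h1, h2⟩; exact ⟨h1, fun t _ => h2 t⟩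
  · rintro ⟨h1, h2⟩
    refine ⟨h1, fun t => ?_⟩
    rcases le_or_gt t N with h | h
    · exact h2 t (Finset.mem_range.mpr (by omega))
    · rw [filter_le_of_subset hI (le_of_lt h), filter_le_of_subset hH (le_of_lt h)]
      omega

def Efam : Finset (Finset ℕ) :=
  {{1,2,3},{1,2,4},{1,2,5},{1,2,6},{1,3,4},{1,3,5},{1,3,6},{1,4,5}}

lemma mem_family {X : Finset ℕ}
    (h1 : X ∈ (Finset.Icc 1 6).powersetCard 3)
    (h2 : compLE X {1, 2, 6} ∨ compLE X {1, 3, 6} ∨ compLE X {1, 4, 5}) :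
    X ∈ Efam := by
  have hXs : X ⊆ Finset.Icc 1 6 := (Finset.mem_powersetCard.mp h1).1
  have hA : ({1, 2, 6} : Finset ℕ) ⊆ Finset.Icc 1 6 := by decide
  have hB : ({1, 3, 6} : Finset ℕ) ⊆ Finset.Icc 1 6 := by decide
  have hC : ({1, 4, 5} : Finset ℕ) ⊆ Finset.Icc 1 6 := by decide
  rw [compLE_iff hXs hA, compLE_iff hXs hB, compLE_iff hXs hC] at h2
  have h2' : X ∈ ((Finset.Icc 1 6).powersetCard 3).filter
      (fun H => compLE' 6 H {1, 2, 6} ∨ compLE' 6 H {1, 3, 6} ∨ compLE' 6 H {1, 4, 5}) :=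
    Finset.mem_filter.mpr ⟨h1, h2⟩
  have key : ∀ Y ∈ ((Finset.Icc 1 6).powersetCard 3).filter
      (fun H => compLE' 6 H {1, 2, 6} ∨ compLE' 6 H {1, 3, 6} ∨ compLE' 6 H {1, 4, 5}),
      Y ∈ Efam := by decide
  exact key X h2'

lemma dd_Efam : ∀ X ∈ Efam, ∀ Y ∈ Efam, ∀ Z ∈ Efam, 4 ≤ dd X Y Z := by decide

open scoped Classical in
theorem stmt14 :
    (∀ X ∈ ((Finset.Icc 1 6).powersetCard 3).filter
        (fun H => compLE H {1, 2, 6} ∨ compLE H {1, 3, 6} ∨ compLE H {1, 4, 5}),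
      ∀ Y ∈ ((Finset.Icc 1 6).powersetCard 3).filter
        (fun H => compLE H {1, 2, 6} ∨ compLE H {1, 3, 6} ∨ compLE H {1, 4, 5}),
      ∀ Z ∈ ((Finset.Icc 1 6).powersetCard 3).filter
        (fun H => compLE H {1, 2, 6} ∨ compLE H {1, 3, 6} ∨ compLE H {1, 4, 5}),
      4 ≤ dd X Y Z) ∧
    dd (({1, 2, 6} : Finset ℕ) ∩ Finset.Icc 1 5) (({1, 3, 6} : Finset ℕ) ∩ Finset.Icc 1 5)
      (({1, 4, 5} : Finset ℕ) ∩ Finset.Icc 1 5) < 4 := by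
  constructor
  · intro X hX Y hY Z hZ
    rw [Finset.mem_filter] at hX hY hZ
    exact dd_Efam X (mem_family hX.1 hX.2) Y (mem_family hY.1 hY.2) Z (mem_family hZ.1 hZ.2)
  · decide
end

section
/- Let k, ℓ, n be positive integers with 3k ≥ ℓ, and for j with ℓ/3 ≤ j ≤ k define f(j,ℓ) = 2j − ⌈ℓ/3⌉ if j < 2ℓ/3 and f(j,ℓ) = 3j − ℓ otherwise. Then the family 𝓕 = {F ∈ ([n] choose k) : |F ∩ [f(j,ℓ)]| ≥ j} satisfies |A∩B| + |B∩C| + |C∩A| ≥ ℓ for all A, B, C ∈ 𝓕, and |𝓕| = Σ_{i=j}^{k} C(f(j,ℓ), i)·C(n − f(j,ℓ), k − i). -/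
open Finset

namespace Finset

variable {α : Type*} [DecidableEq α] {S X Y Z : Finset α}

theorem card_add_card_add_card_le_of_subset (hX : X ⊆ S) (hY : Y ⊆ S) (hZ : Z ⊆ S) :
    #X + #Y + #Z ≤ #(X ∩ Y) + #(Y ∩ Z) + #(Z ∩ X) + #S := by
  have hXYZ : #(X ∪ Y ∪ Z) ≤ #S := card_le_card (union_subset (union_subset hX hY) hZ)
  have hXY := card_inter_add_card_union X Y
  have hXYZ' := card_inter_add_card_union (X ∪ Y) Z
  have hXY_Z : #((X ∪ Y) ∩ Z) ≤ #(Z ∩ X) + #(Y ∩ Z) := by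
    rw [union_inter_distrib_right, inter_comm X]
    exact card_union_le _ _
  omega

theorem two_mul_card_add_card_add_card_le_of_subset (hX : X ⊆ S) (hY : Y ⊆ S) (hZ : Z ⊆ S) :
    2 * (#X + #Y + #Z) ≤ #(X ∩ Y) + #(Y ∩ Z) + #(Z ∩ X) + 3 * #S := by
  have hXY := card_inter_add_card_union X Y
  have hYZ := card_inter_add_card_union Y Z
  have hZX := card_inter_add_card_union Z X
  have hXY' := card_le_card (union_subset hX hY)
  have hYZ' := card_le_card (union_subset hY hZ)
  have hZX' := card_le_card (union_subset hZ hX)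
  omega

theorem card_filter_card_inter_eq_of_subset {U : Finset α} (hS : S ⊆ U) {i k : ℕ} (hik : i ≤ k) :
    #{F ∈ U.powersetCard k | #(F ∩ S) = i} = (#S).choose i * (#U - #S).choose (k - i) := by
  rw [← card_sdiff_of_subset hS, ← card_powersetCard, ← card_powersetCard, ← card_product]
  refine card_nbij' (fun F => (F ∩ S, F \ S)) (fun P => P.1 ∪ P.2) ?_ ?_ ?_ ?_
  · intro F hF
    simp only [mem_coe, mem_filter, mem_powersetCard] at hF
    obtain ⟨⟨hFU, hFk⟩, hFi⟩ := hF
    have hsplit := card_sdiff_add_card_inter F S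
    simp only [mem_coe, mem_product, mem_powersetCard]
    exact ⟨⟨inter_subset_right, hFi⟩, sdiff_subset_sdiff hFU le_rfl, by omega⟩
  · rintro ⟨X, Y⟩ hP
    simp only [mem_coe, mem_product, mem_powersetCard] at hP
    obtain ⟨⟨hXS, hXi⟩, hYUS, hYk⟩ := hP
    have hYS : Disjoint Y S := disjoint_of_subset_left hYUS sdiff_disjoint
    have hdisj : Disjoint X Y := disjoint_of_subset_left hXS hYS.symm
    simp only [mem_coe, mem_filter, mem_powersetCard]
    refine ⟨⟨union_subset (hXS.trans hS) (hYUS.trans sdiff_subset), ?_⟩, ?_⟩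
    · rw [card_union_of_disjoint hdisj]; omega
    · rw [union_inter_distrib_right, inter_eq_left.2 hXS, disjoint_iff_inter_eq_empty.1 hYS,
        union_empty, hXi]
  · intro F _
    exact (union_comm _ _).trans (sdiff_union_inter F S)
  · rintro ⟨X, Y⟩ hP
    simp only [mem_coe, mem_product, mem_powersetCard] at hP
    have hYS : Disjoint Y S := disjoint_of_subset_left hP.2.1 sdiff_disjoint
    simp only [union_inter_distrib_right, inter_eq_left.2 hP.1.1,
      disjoint_iff_inter_eq_empty.1 hYS, union_empty, union_sdiff_distrib,
      sdiff_eq_empty_iff_subset.2 hP.1.1, hYS.sdiff_eq_left, empty_union]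

theorem card_filter_le_card_inter_of_subset {U : Finset α} (hS : S ⊆ U) (j k : ℕ) :
    #{F ∈ U.powersetCard k | j ≤ #(F ∩ S)} =
      ∑ i ∈ Icc j k, (#S).choose i * (#U - #S).choose (k - i) := by
  rw [card_eq_sum_card_fiberwise (f := fun F => #(F ∩ S)) (t := Icc j k)]
  · refine sum_congr rfl fun i hi => ?_
    rw [mem_Icc] at hi
    rw [filter_filter, ← card_filter_card_inter_eq_of_subset hS hi.2]
    congr 1
    exact filter_congr fun F _ => ⟨fun h => h.2, fun h => ⟨h ▸ hi.1, h⟩⟩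
  · intro F hF
    simp only [mem_coe, mem_filter, mem_powersetCard] at hF
    exact mem_Icc.2 ⟨hF.2, hF.1.2 ▸ card_le_card inter_subset_left⟩

end Finset

theorem le_dd_of_le_card_inter {A B C S : Finset ℕ} {j ℓ : ℕ} (hjℓ : ℓ ≤ 3 * j)
    (hS : #S = ff j ℓ) (hA : j ≤ #(A ∩ S)) (hB : j ≤ #(B ∩ S)) (hC : j ≤ #(C ∩ S)) :
    ℓ ≤ dd A B C := by
  have hA' : A ∩ S ⊆ S := inter_subset_right
  have hB' : B ∩ S ⊆ S := inter_subset_right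
  have hC' : C ∩ S ⊆ S := inter_subset_right
  have h₁ := card_add_card_add_card_le_of_subset hA' hB' hC'
  have h₂ := two_mul_card_add_card_add_card_le_of_subset hA' hB' hC'
  have mono (P Q : Finset ℕ) : #(P ∩ S ∩ (Q ∩ S)) ≤ #(P ∩ Q) :=
    card_le_card (inter_subset_inter inter_subset_left inter_subset_left)
  have hAB := mono A B
  have hBC := mono B C
  have hCA := mono C A
  unfold dd
  unfold ff at hS
  split_ifs at hS <;> omega

theorem stmt15_general (n k ℓ j : ℕ) (hjℓ : ℓ ≤ 3 * j) (hfn : ff j ℓ ≤ n) :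
    (∀ A ∈ ((Finset.Icc 1 n).powersetCard k).filter
        (fun F => j ≤ (F ∩ Finset.Icc 1 (ff j ℓ)).card),
      ∀ B ∈ ((Finset.Icc 1 n).powersetCard k).filter
        (fun F => j ≤ (F ∩ Finset.Icc 1 (ff j ℓ)).card),
      ∀ C ∈ ((Finset.Icc 1 n).powersetCard k).filter
        (fun F => j ≤ (F ∩ Finset.Icc 1 (ff j ℓ)).card),
      ℓ ≤ dd A B C) ∧
    (((Finset.Icc 1 n).powersetCard k).filter
        (fun F => j ≤ (F ∩ Finset.Icc 1 (ff j ℓ)).card)).card =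
      ∑ i ∈ Finset.Icc j k, (ff j ℓ).choose i * (n - ff j ℓ).choose (k - i) := by
  have hcard (m : ℕ) : #(Icc 1 m) = m := by simp
  refine ⟨fun A hA B hB C hC => ?_, ?_⟩
  · simp only [mem_filter] at hA hB hC
    exact le_dd_of_le_card_inter hjℓ (hcard _) hA.2 hB.2 hC.2
  · rw [card_filter_le_card_inter_of_subset (Icc_subset_Icc_right hfn), hcard, hcard]

theorem stmt15 (n k ℓ j : ℕ) (hk : 0 < k) (hℓ : 0 < ℓ) (hn : 0 < n)
    (hkℓ : ℓ ≤ 3 * k) (hjℓ : ℓ ≤ 3 * j) (hjk : j ≤ k) (hfn : ff j ℓ ≤ n) :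
    (∀ A ∈ ((Finset.Icc 1 n).powersetCard k).filter
        (fun F => j ≤ (F ∩ Finset.Icc 1 (ff j ℓ)).card),
      ∀ B ∈ ((Finset.Icc 1 n).powersetCard k).filter
        (fun F => j ≤ (F ∩ Finset.Icc 1 (ff j ℓ)).card),
      ∀ C ∈ ((Finset.Icc 1 n).powersetCard k).filter
        (fun F => j ≤ (F ∩ Finset.Icc 1 (ff j ℓ)).card),
      ℓ ≤ dd A B C) ∧
    (((Finset.Icc 1 n).powersetCard k).filter
        (fun F => j ≤ (F ∩ Finset.Icc 1 (ff j ℓ)).card)).card =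
      ∑ i ∈ Finset.Icc j k, (ff j ℓ).choose i * (n - ff j ℓ).choose (k - i) :=
  stmt15_general n k ℓ j hjℓ hfn
end

section
/- Let x = 6p + q with p ≥ 1 and 0 ≤ q ≤ 5, and suppose n ≥ 2^{3p+2}·p² + p + 1. Let 𝓕 ⊆ 2^[n] satisfy d̄(A,B,C) ≤ x for all A, B, C ∈ 𝓕. If there exist A, B ∈ 𝓕 with d̄(A,B) := 2g₁ + 3g₂ > 4p + q (g_m counts elements in exactly m of {A,B}), then |𝓕| < Σ_{i=0}^{p} C(n,i); in particular 𝓕 is not of maximum size in this class. -/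
/-- Number of elements of `[n] = {1,…,n}` contained in exactly `m` of the sets `A`, `B`, `C`. -/
def fm (n m : ℕ) (A B C : Finset ℕ) : ℕ :=
  ((Finset.Icc 1 n).filter (fun x =>
    (if x ∈ A then 1 else 0) + (if x ∈ B then 1 else 0) + (if x ∈ C then 1 else 0) = m)).card

/-- `d̄(A,B,C) = 2f₁ + 3f₂ + 3f₃`. -/
def dbar (n : ℕ) (A B C : Finset ℕ) : ℕ :=
  2 * fm n 1 A B C + 3 * fm n 2 A B C + 3 * fm n 3 A B C

/-- Number of elements of `[n]` contained in exactly `m` of the sets `A`, `B`. -/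
def gm (n m : ℕ) (A B : Finset ℕ) : ℕ :=
  ((Finset.Icc 1 n).filter (fun x =>
    (if x ∈ A then 1 else 0) + (if x ∈ B then 1 else 0) = m)).card

/-- `d̄(A,B) = 2g₁ + 3g₂`. -/
def dbar2 (n : ℕ) (A B : Finset ℕ) : ℕ := 2 * gm n 1 A B + 3 * gm n 2 A B

/-!
Fix `A, B ∈ 𝓕` with `d̄(A,B) > 4p + q`. Pointwise comparison of the weights gives
`5|A ∪ B| ≤ d̄(A,B,B) + d̄(A,B,A) ≤ 2x`, so `|A ∪ B| ≤ 3p + 1`, and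
`d̄(A,B) + 2|C \ (A ∪ B)| ≤ d̄(A,B,C) ≤ x` for every `C ∈ 𝓕`, so `|C \ (A ∪ B)| < p`.
Thus `C ↦ (C ∩ (A ∪ B), C \ (A ∪ B))` embeds `𝓕` into a set of size at most
`2^(3p+1) · Σ_{i<p} C(n,i) ≤ 2^(3p+1) · p · C(n,p-1)`, which is smaller than
`C(n,p) = C(n,p-1) (n-p+1) / p` once `n` is large.
-/

open Finset

section Weights

variable {n : ℕ} {A B C : Finset ℕ}

lemma card_eq_sum_Icc_ite_mem (hC : C ⊆ Icc 1 n) :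
    #C = ∑ x ∈ Icc 1 n, if x ∈ C then 1 else 0 := by
  rw [sum_boole, filter_mem_eq_inter, inter_eq_right.2 hC, Nat.cast_id]

lemma five_mul_card_union_le_dbar_add_dbar (hA : A ⊆ Icc 1 n) (hB : B ⊆ Icc 1 n) :
    5 * #(A ∪ B) ≤ dbar n A B B + dbar n A B A := by
  rw [card_eq_sum_Icc_ite_mem (union_subset hA hB)]
  simp only [dbar, fm, card_filter, mul_sum, ← sum_add_distrib]
  refine sum_le_sum fun x _ => ?_
  by_cases x ∈ A <;> by_cases x ∈ B <;> simp [*]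

lemma dbar2_add_two_mul_card_sdiff_le_dbar (hC : C ⊆ Icc 1 n) :
    dbar2 n A B + 2 * #(C \ (A ∪ B)) ≤ dbar n A B C := by
  rw [card_eq_sum_Icc_ite_mem (sdiff_subset.trans hC)]
  simp only [dbar, dbar2, fm, gm, card_filter, mul_sum, ← sum_add_distrib]
  refine sum_le_sum fun x _ => ?_
  by_cases x ∈ A <;> by_cases x ∈ B <;> by_cases x ∈ C <;> simp [*]

end Weights

lemma card_le_two_pow_mul_sum_choose {α : Type*} [DecidableEq α] {U s : Finset α}
    {𝓕 : Finset (Finset α)} {p : ℕ} (h𝓕 : ∀ C ∈ 𝓕, C ⊆ s) (hout : ∀ C ∈ 𝓕, #(C \ U) < p) :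
    #𝓕 ≤ 2 ^ #U * ∑ i ∈ range p, (#s).choose i := by
  calc #𝓕 ≤ #(U.powerset ×ˢ (range p).biUnion (s.powersetCard ·)) := by
        refine card_le_card_of_injOn (fun C => (C ∩ U, C \ U)) (fun C hC => ?_) ?_
        · exact mem_product.2 ⟨mem_powerset.2 inter_subset_right, mem_biUnion.2
            ⟨_, mem_range.2 (hout C hC), mem_powersetCard.2 ⟨sdiff_subset.trans (h𝓕 C hC), rfl⟩⟩⟩
        · intro C _ D _ hCD
          obtain ⟨hinter, hsdiff⟩ := Prod.mk.inj hCD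
          rw [← sdiff_union_inter C U, ← sdiff_union_inter D U, hinter, hsdiff]
    _ ≤ 2 ^ #U * ∑ i ∈ range p, (#s).choose i := by
        rw [card_product, card_powerset]
        gcongr
        exact card_biUnion_le.trans (by simp [card_powersetCard])

lemma Nat.choose_le_choose_of_le_half {n i k : ℕ} (hik : i ≤ k) (hk : k ≤ n / 2) :
    n.choose i ≤ n.choose k := by
  induction hik with
  | refl => rfl
  | step _ ih => exact (ih (by omega)).trans (Nat.choose_le_succ_of_lt_half_left (by omega))

lemma Nat.mul_sum_range_choose_lt_choose {n p M : ℕ} (h : M * p ^ 2 + p ≤ n) :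
    M * ∑ i ∈ range p, n.choose i < n.choose p := by
  obtain _ | r := p
  · simp
  obtain rfl | hM := M.eq_zero_or_pos
  · simpa using Nat.choose_pos (by omega)
  have hr : r + 1 ≤ M * (r + 1) ^ 2 := by nlinarith
  have hsum : ∑ i ∈ range (r + 1), n.choose i ≤ (r + 1) * n.choose r := by
    simpa using sum_le_sum fun i hi =>
      Nat.choose_le_choose_of_le_half (n := n) (Nat.lt_succ_iff.1 (mem_range.1 hi)) (by omega)
  refine Nat.lt_of_mul_lt_mul_right (a := r + 1) ?_
  calc M * (∑ i ∈ range (r + 1), n.choose i) * (r + 1)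
      ≤ M * ((r + 1) * n.choose r) * (r + 1) := by gcongr
    _ = M * (r + 1) ^ 2 * n.choose r := by ring
    _ < (n - r) * n.choose r := by
        have := Nat.choose_pos (show r ≤ n by omega)
        gcongr
        omega
    _ = n.choose (r + 1) * (r + 1) := by rw [Nat.choose_succ_right_eq, mul_comm]

theorem stmt16 (n p q x : ℕ) (hp : 1 ≤ p) (hq : q ≤ 5) (hx : x = 6 * p + q)
    (hn : 2 ^ (3 * p + 2) * p ^ 2 + p + 1 ≤ n)
    (𝓕 : Finset (Finset ℕ)) (h𝓕 : ∀ F ∈ 𝓕, F ⊆ Finset.Icc 1 n)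
    (hd : ∀ A ∈ 𝓕, ∀ B ∈ 𝓕, ∀ C ∈ 𝓕, dbar n A B C ≤ x)
    (hAB : ∃ A ∈ 𝓕, ∃ B ∈ 𝓕, 4 * p + q < dbar2 n A B) :
    𝓕.card < ∑ i ∈ Finset.range (p + 1), n.choose i := by
  obtain ⟨A, hA, B, hB, hAB⟩ := hAB
  have hU : #(A ∪ B) ≤ 3 * p + 1 := by
    have hweights := five_mul_card_union_le_dbar_add_dbar (h𝓕 A hA) (h𝓕 B hB)
    have hABB := hd A hA B hB B hB
    have hABA := hd A hA B hB A hA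
    omega
  have hout : ∀ C ∈ 𝓕, #(C \ (A ∪ B)) < p := fun C hC => by
    have hweights := dbar2_add_two_mul_card_sdiff_le_dbar (A := A) (B := B) (h𝓕 C hC)
    have hABC := hd A hA B hB C hC
    omega
  have hchoose : 2 ^ (3 * p + 1) * ∑ i ∈ range p, n.choose i < n.choose p := by
    refine Nat.mul_sum_range_choose_lt_choose ?_
    have hpow : 2 ^ (3 * p + 2) * p ^ 2 = 2 * (2 ^ (3 * p + 1) * p ^ 2) := by ring
    omega
  calc #𝓕 ≤ 2 ^ #(A ∪ B) * ∑ i ∈ range p, (#(Icc 1 n)).choose i :=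
        card_le_two_pow_mul_sum_choose h𝓕 hout
    _ ≤ 2 ^ (3 * p + 1) * ∑ i ∈ range p, n.choose i := by
        rw [Nat.card_Icc, Nat.add_sub_cancel]
        gcongr
        norm_num
    _ < n.choose p := hchoose
    _ ≤ ∑ i ∈ range (p + 1), n.choose i := single_le_sum (by simp) (self_mem_range_succ p)
end

section
/- Let p ≥ 1 and n ≥ 2^{3p+2}·p² + p + 1. The maximum size of a family 𝓕 ⊆ 2^[n] such that |A∩B| + |B∩C| + |C∩A| ≥ 3n − 6p for all A, B, C ∈ 𝓕 equals Σ_{i=0}^{p} C(n,i) (achieved by the complements of all sets of size ≤ p, i.e., all sets of size ≥ n − p). -/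
/-!
Pass to complements inside `U = [n]`: the condition `d(A,B,C) ≥ 3n - 6p` says exactly that the
complements satisfy `|a ∪ b| + |b ∪ c| + |c ∪ a| ≤ 6p`.

For the upper bound, if every member of such a family `G` has size `≤ p` we are done. Otherwise
take `g ∈ G` with `|g| > p` and `h ∈ G` maximising `|h \ g|`. The triples `(g,h,h)` and `(g,h,k)`
force `|g ∪ h| ≤ 3p` and `|k \ (g ∪ h)| < p` for every `k ∈ G`, so `k ↦ (k ∩ (g ∪ h), k \ (g ∪ h))`
embeds `G` into a set of size `2^{3p} ∑_{i < p} C(n,i)`, which is at most `C(n,p)` once `n` is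
large compared with `2^{3p} p²`.
-/

open Finset

theorem Nat.choose_le_choose_of_le_half_s17 {n a b : ℕ} (hab : a ≤ b) (hb : b ≤ n / 2) :
    n.choose a ≤ n.choose b := by
  induction hab with
  | refl => rfl
  | step _ ih => exact (ih (by omega)).trans (choose_le_succ_of_lt_half_left (by omega))

theorem Nat.mul_sum_range_choose_le {c n p : ℕ} (h : c * p ^ 2 + p ≤ n + 1) :
    c * ∑ i ∈ range p, n.choose i ≤ n.choose p := by
  rcases Nat.eq_zero_or_pos c with rfl | hc
  · simp
  obtain _ | q := p
  · simp
  have hq : q ≤ n / 2 := by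
    have : (q + 1) ^ 2 ≤ c * (q + 1) ^ 2 := Nat.le_mul_of_pos_left _ hc
    rw [Nat.le_div_iff_mul_le two_pos]
    nlinarith
  have hsum : ∑ i ∈ range (q + 1), n.choose i ≤ (q + 1) * n.choose q := by
    simpa using sum_le_sum fun i hi => choose_le_choose_of_le_half_s17 (mem_range_succ_iff.1 hi) hq
  refine Nat.le_of_mul_le_mul_right ?_ (Nat.succ_pos q)
  calc (c * ∑ i ∈ range (q + 1), n.choose i) * (q + 1)
      ≤ c * ((q + 1) * n.choose q) * (q + 1) := by gcongr
    _ = c * (q + 1) ^ 2 * n.choose q := by ring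
    _ ≤ (n - q) * n.choose q := by gcongr; omega
    _ = n.choose (q + 1) * (q + 1) := by rw [choose_succ_right_eq, mul_comm]

section SetFamilies

variable {α : Type*} [DecidableEq α]

theorem card_filter_powerset_card_lt (U : Finset α) (m : ℕ) :
    #{s ∈ U.powerset | #s < m} = ∑ i ∈ range m, (#U).choose i := by
  have hbiUnion : {s ∈ U.powerset | #s < m} = (range m).biUnion (powersetCard · U) := by
    ext s
    simp only [mem_filter, mem_powerset, mem_biUnion, mem_range, mem_powersetCard]
    exact ⟨fun ⟨hs, hm⟩ => ⟨#s, hm, hs, rfl⟩, fun ⟨_, hm, hs, rfl⟩ => ⟨hs, hm⟩⟩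
  rw [hbiUnion, card_biUnion fun i _ j _ hij => pairwise_disjoint_powersetCard U hij]
  simp only [card_powersetCard]

theorem card_image_sdiff {U : Finset α} {𝓕 : Finset (Finset α)} (h𝓕 : ∀ A ∈ 𝓕, A ⊆ U) :
    #(𝓕.image (U \ ·)) = #𝓕 :=
  card_image_of_injOn fun A hA B hB hAB => by
    rw [← Finset.sdiff_sdiff_eq_self (h𝓕 A hA), ← Finset.sdiff_sdiff_eq_self (h𝓕 B hB)]
    exact congrArg (U \ ·) hAB

theorem card_le_two_pow_mul_of_card_sdiff_lt {U W : Finset α} {G : Finset (Finset α)} {p : ℕ}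
    (hGU : ∀ k ∈ G, k ⊆ U) (hW : ∀ k ∈ G, #(k \ W) < p) :
    #G ≤ 2 ^ #W * ∑ i ∈ range p, (#U).choose i := by
  rw [← card_powerset, ← card_filter_powerset_card_lt, ← card_product]
  refine card_le_card_of_injOn (fun k => (k ∩ W, k \ W)) (fun k hk => ?_) fun k hk l hl hkl => ?_
  · exact mem_coe.2 <| mem_product.2 ⟨mem_powerset.2 inter_subset_right,
      mem_filter.2 ⟨mem_powerset.2 (sdiff_subset.trans (hGU k hk)), hW k hk⟩⟩
  · simp only [Prod.mk.injEq] at hkl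
    rw [← sdiff_union_inter k W, ← sdiff_union_inter l W, hkl.1, hkl.2]

def UnionBounded (G : Finset (Finset α)) (r : ℕ) : Prop :=
  ∀ g ∈ G, ∀ h ∈ G, ∀ k ∈ G, #(g ∪ h) + #(h ∪ k) + #(k ∪ g) ≤ r

theorem UnionBounded.card_sdiff_union_lt {G : Finset (Finset α)} {p : ℕ}
    (hG : UnionBounded G (6 * p)) {g h : Finset α} (hg : g ∈ G) (hgp : p < #g) (hh : h ∈ G)
    (hmax : ∀ k ∈ G, #(k \ g) ≤ #(h \ g)) :
    #(g ∪ h) ≤ 3 * p ∧ ∀ k ∈ G, #(k \ (g ∪ h)) < p := by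
  have hgh : #(g ∪ h) = #g + #(h \ g) := by rw [union_comm, ← card_sdiff_add_card, add_comm]
  have hh_sdiff : #(h \ g) ≤ #h := card_le_card sdiff_subset
  have hghh := hG g hg h hh h hh
  rw [union_self, union_comm h g] at hghh
  refine ⟨by omega, fun k hk => ?_⟩
  have hkg : #(k ∪ g) = #g + #(k \ g) := by rw [← card_sdiff_add_card, add_comm]
  have hhk : #(h \ g) + #(k \ (g ∪ h)) ≤ #(h ∪ k) := by
    rw [← card_union_of_disjoint]
    · exact card_le_card (union_subset_union sdiff_subset sdiff_subset)
    · exact disjoint_left.2 fun x hx hx' =>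
        (mem_sdiff.1 hx').2 (mem_union_right g (mem_sdiff.1 hx).1)
  have hkW : #(k \ (g ∪ h)) ≤ #(k \ g) :=
    card_le_card (sdiff_subset_sdiff subset_rfl subset_union_left)
  have := hG g hg h hh k hk
  have := hmax k hk
  omega

theorem UnionBounded.card_le {U : Finset α} {G : Finset (Finset α)} {p : ℕ}
    (hGU : ∀ g ∈ G, g ⊆ U) (hG : UnionBounded G (6 * p)) (hU : 2 ^ (3 * p) * p ^ 2 + p ≤ #U + 1) :
    #G ≤ ∑ i ∈ range (p + 1), (#U).choose i := by
  by_cases hsmall : ∀ g ∈ G, #g ≤ p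
  · rw [← card_filter_powerset_card_lt]
    exact card_le_card fun g hg => by simpa [Nat.lt_succ_iff] using ⟨hGU g hg, hsmall g hg⟩
  push Not at hsmall
  obtain ⟨g, hg, hgp⟩ := hsmall
  obtain ⟨h, hh, hmax⟩ := G.exists_max_image (fun k => #(k \ g)) ⟨g, hg⟩
  obtain ⟨hW, hcore⟩ := hG.card_sdiff_union_lt hg hgp hh hmax
  calc #G ≤ 2 ^ #(g ∪ h) * ∑ i ∈ range p, (#U).choose i :=
        card_le_two_pow_mul_of_card_sdiff_lt hGU hcore
    _ ≤ 2 ^ (3 * p) * ∑ i ∈ range p, (#U).choose i := by gcongr; norm_num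
    _ ≤ (#U).choose p := Nat.mul_sum_range_choose_le hU
    _ ≤ ∑ i ∈ range (p + 1), (#U).choose i :=
        single_le_sum (fun _ _ => Nat.zero_le _) (self_mem_range_succ p)

end SetFamilies

theorem card_sdiff_inter_sdiff_add_card_union {α : Type*} [DecidableEq α] {U a b : Finset α}
    (ha : a ⊆ U) (hb : b ⊆ U) : #((U \ a) ∩ (U \ b)) + #(a ∪ b) = #U := by
  rw [← sdiff_union_distrib]
  exact card_sdiff_add_card_eq_card (union_subset ha hb)

theorem dd_sdiff_add_card_union {U a b c : Finset ℕ} (ha : a ⊆ U) (hb : b ⊆ U) (hc : c ⊆ U) :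
    dd (U \ a) (U \ b) (U \ c) + (#(a ∪ b) + #(b ∪ c) + #(c ∪ a)) = 3 * #U := by
  have := card_sdiff_inter_sdiff_add_card_union ha hb
  have := card_sdiff_inter_sdiff_add_card_union hb hc
  have := card_sdiff_inter_sdiff_add_card_union hc ha
  unfold dd
  omega

theorem unionBounded_image_sdiff {U : Finset ℕ} {𝓕 : Finset (Finset ℕ)} {p : ℕ}
    (h𝓕U : ∀ A ∈ 𝓕, A ⊆ U) (h𝓕 : ∀ A ∈ 𝓕, ∀ B ∈ 𝓕, ∀ C ∈ 𝓕, 3 * #U - 6 * p ≤ dd A B C) :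
    UnionBounded (𝓕.image (U \ ·)) (6 * p) := by
  simp only [UnionBounded, forall_mem_image]
  intro A hA B hB C hC
  have := dd_sdiff_add_card_union (sdiff_subset : U \ A ⊆ U) (sdiff_subset : U \ B ⊆ U)
    (sdiff_subset : U \ C ⊆ U)
  rw [Finset.sdiff_sdiff_eq_self (h𝓕U A hA), Finset.sdiff_sdiff_eq_self (h𝓕U B hB),
    Finset.sdiff_sdiff_eq_self (h𝓕U C hC)] at this
  have := h𝓕 A hA B hB C hC
  omega

theorem le_dd_sdiff {U a b c : Finset ℕ} {p : ℕ} (ha : a ⊆ U) (hb : b ⊆ U) (hc : c ⊆ U)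
    (hap : #a ≤ p) (hbp : #b ≤ p) (hcp : #c ≤ p) : 3 * #U - 6 * p ≤ dd (U \ a) (U \ b) (U \ c) := by
  have := dd_sdiff_add_card_union ha hb hc
  have := card_union_le a b
  have := card_union_le b c
  have := card_union_le c a
  omega

theorem stmt17_general (n p : ℕ) (hn : 2 ^ (3 * p + 2) * p ^ 2 + p + 1 ≤ n) :
    IsGreatest {m : ℕ | ∃ 𝓕 : Finset (Finset ℕ), (∀ F ∈ 𝓕, F ⊆ Finset.Icc 1 n) ∧
        (∀ A ∈ 𝓕, ∀ B ∈ 𝓕, ∀ C ∈ 𝓕, 3 * n - 6 * p ≤ dd A B C) ∧ 𝓕.card = m}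
      (∑ i ∈ Finset.range (p + 1), n.choose i) := by
  set U := Icc 1 n
  have hU : #U = n := by simp [U]
  have hpU : 2 ^ (3 * p) * p ^ 2 + p ≤ #U + 1 := by
    have : 2 ^ (3 * p + 2) * p ^ 2 = 4 * (2 ^ (3 * p) * p ^ 2) := by ring
    omega
  constructor
  · have hsub : ∀ a ∈ {a ∈ U.powerset | #a < p + 1}, a ⊆ U := fun a ha =>
      mem_powerset.1 (mem_filter.1 ha).1
    refine ⟨{a ∈ U.powerset | #a < p + 1}.image (U \ ·), ?_, ?_, ?_⟩
    · simpa only [forall_mem_image] using fun _ _ => sdiff_subset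
    · simp only [forall_mem_image, mem_filter, mem_powerset, Nat.lt_succ_iff]
      intro a ha b hb c hc
      simpa only [hU] using le_dd_sdiff ha.1 hb.1 hc.1 ha.2 hb.2 hc.2
    · rw [card_image_sdiff hsub, card_filter_powerset_card_lt, hU]
  · rintro m ⟨𝓕, h𝓕U, h𝓕, rfl⟩
    have h𝓕' : ∀ A ∈ 𝓕, ∀ B ∈ 𝓕, ∀ C ∈ 𝓕, 3 * #U - 6 * p ≤ dd A B C := by rwa [hU]
    have := (unionBounded_image_sdiff h𝓕U h𝓕').card_le (by simp) hpU
    rwa [card_image_sdiff h𝓕U, hU] at this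

theorem stmt17 (n p : ℕ) (hp : 1 ≤ p) (hn : 2 ^ (3 * p + 2) * p ^ 2 + p + 1 ≤ n) :
    IsGreatest {m : ℕ | ∃ 𝓕 : Finset (Finset ℕ), (∀ F ∈ 𝓕, F ⊆ Finset.Icc 1 n) ∧
        (∀ A ∈ 𝓕, ∀ B ∈ 𝓕, ∀ C ∈ 𝓕, 3 * n - 6 * p ≤ dd A B C) ∧ 𝓕.card = m}
      (∑ i ∈ Finset.range (p + 1), n.choose i) :=
  stmt17_general n p hn
end
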